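/- Let A be a closed densely defined operator from a Hilbert space H₁ to a Hilbert space H₂ and m ≥ 0. Define L on H₁ ⊕ H₂ by the block matrix L = [[m, A*],[A, −m]]. Then spec(L) = (−√(spec(A A* + m²))) ∪ √(spec(A* A + m²)), where √S := {√s : s ∈ S}. -/

import Mathlib

open ContinuousLinearMap

section Susy

variable {H₁ H₂ : Type*} [NormedAddCommGroup H₁] [InnerProductSpace ℂ H₁] [CompleteSpace H₁]
  [NormedAddCommGroup H₂] [InnerProductSpace ℂ H₂] [CompleteSpace H₂]

noncomputable def susyOp (A : H₁ →L[ℂ] H₂) (μ : ℂ) : (H₁ × H₂) →L[ℂ] (H₁ × H₂) :=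
  ((μ • fst ℂ H₁ H₂ + (adjoint A).comp (snd ℂ H₁ H₂)).prod
      (A.comp (fst ℂ H₁ H₂) - μ • snd ℂ H₁ H₂))

noncomputable def opT (A : H₁ →L[ℂ] H₂) (μ : ℂ) : H₁ →L[ℂ] H₁ :=
  (adjoint A).comp A + (μ ^ 2) • ContinuousLinearMap.id ℂ H₁

lemma susyM_apply (A : H₁ →L[ℂ] H₂) (μ l : ℂ) (u : H₁) (v : H₂) :
    (algebraMap ℂ ((H₁ × H₂) →L[ℂ] (H₁ × H₂)) l - susyOp A μ) (u, v)
      = ((l - μ) • u - adjoint A v, (l + μ) • v - A u) := by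
  simp [susyOp, Algebra.algebraMap_eq_smul_one, Prod.smul_mk, Prod.mk_sub_mk, sub_smul, add_smul]
  constructor <;> module

lemma opD_apply (A : H₁ →L[ℂ] H₂) (μ l : ℂ) (u : H₁) :
    (algebraMap ℂ (H₁ →L[ℂ] H₁) (l ^ 2) - opT A μ) u
      = (l ^ 2 - μ ^ 2) • u - adjoint A (A u) := by
  simp [opT, Algebra.algebraMap_eq_smul_one, sub_smul]
  module

lemma susy_isUnit_of_ptInverse' {X : Type*} [NormedAddCommGroup X] [NormedSpace ℂ X]
    {f g : X →L[ℂ] X} (h1 : ∀ x, f (g x) = x)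
    (h2 : ∀ x, g (f x) = x) : IsUnit f :=
  isUnit_iff_exists.mpr ⟨g, by ext x; simp [mul_apply, h1 x],
    by ext x; simp [mul_apply, h2 x]⟩

lemma susy_ptInverse_of_isUnit' {X : Type*} [NormedAddCommGroup X] [NormedSpace ℂ X]
    {f : X →L[ℂ] X} (h : IsUnit f) :
    ∃ g : X →L[ℂ] X, (∀ x, f (g x) = x) ∧ (∀ x, g (f x) = x) := by
  obtain ⟨g, hg1, hg2⟩ := isUnit_iff_exists.mp h
  exact ⟨g, fun x => by simpa [mul_apply] using ContinuousLinearMap.ext_iff.mp hg1 x,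
    fun x => by simpa [mul_apply] using ContinuousLinearMap.ext_iff.mp hg2 x⟩

/-- Schur complement: for `l + μ ≠ 0`, `l - susyOp A μ` is invertible iff `l² - (A*A + μ²)` is. -/
lemma susy_key_isUnit (A : H₁ →L[ℂ] H₂) (μ l : ℂ) (hc : l + μ ≠ 0) :
    IsUnit (algebraMap ℂ ((H₁ × H₂) →L[ℂ] (H₁ × H₂)) l - susyOp A μ)
      ↔ IsUnit (algebraMap ℂ (H₁ →L[ℂ] H₁) (l ^ 2) - opT A μ) := by
  set M := algebraMap ℂ ((H₁ × H₂) →L[ℂ] (H₁ × H₂)) l - susyOp A μ with hM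
  set D := algebraMap ℂ (H₁ →L[ℂ] H₁) (l ^ 2) - opT A μ with hD
  have hcc : (l + μ) * (l - μ) = l ^ 2 - μ ^ 2 := by ring
  constructor
  · intro hU
    obtain ⟨N, hN1, hN2⟩ := susy_ptInverse_of_isUnit' hU
    set p : H₁ → H₁ := fun x => (N (x, 0)).1 with hp
    set r : H₁ → H₂ := fun x => (N (x, 0)).2 with hr
    have E1 : ∀ x, (l - μ) • p x - adjoint A (r x) = x := by
      intro x
      have h1 := hN1 (x, 0)
      rw [← Prod.mk.eta (p := N (x, 0)), susyM_apply] at h1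
      simpa using congrArg Prod.fst h1
    have E2 : ∀ x, A (p x) = (l + μ) • r x := by
      intro x
      have h1 := hN1 (x, 0)
      rw [← Prod.mk.eta (p := N (x, 0)), susyM_apply] at h1
      have h2 := congrArg Prod.snd h1
      simp only at h2
      linear_combination (norm := module) -h2
    have E3 : ∀ u, (l - μ) • p u - (N (0, A u)).1 = u := by
      intro u
      have h2 := hN2 (u, 0)
      rw [susyM_apply] at h2
      simp only [map_zero, sub_zero, smul_zero, zero_sub] at h2
      have hdec : ((l - μ) • u, -(A u)) = (l - μ) • ((u : H₁), (0 : H₂)) - ((0 : H₁), A u) := by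
        simp [Prod.smul_mk, Prod.mk_sub_mk]
      rw [hdec, map_sub, map_smul] at h2
      simpa using congrArg Prod.fst h2
    have E4 : ∀ v, (N (adjoint A v, 0)).1 = (l + μ) • (N (0, v)).1 := by
      intro v
      have h2 := hN2 (0, v)
      rw [susyM_apply] at h2
      simp only [smul_zero, map_zero, zero_sub, sub_zero] at h2
      have hdec : (-(adjoint A v), (l + μ) • v)
          = (l + μ) • ((0 : H₁), v) - (adjoint A v, (0 : H₂)) := by
        simp [Prod.smul_mk, Prod.mk_sub_mk]
      rw [hdec, map_sub, map_smul] at h2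
      have h3 := congrArg Prod.fst h2
      simp only [Prod.fst_sub, Prod.smul_fst] at h3
      linear_combination (norm := module) -h3
    refine susy_isUnit_of_ptInverse'
      (g := (l + μ)⁻¹ • ((fst ℂ H₁ H₂) ∘L N ∘L (inl ℂ H₁ H₂))) ?_ ?_
    · intro x
      have e2' : adjoint A (A (p x)) = (l + μ) • adjoint A (r x) := by
        rw [E2 x, map_smul]
      have key : D (p x) = (l + μ) • x := by
        rw [hD, opD_apply]
        linear_combination (norm := module) -e2' + (l + μ) • E1 x
      have h5 : D ((l + μ)⁻¹ • p x) = (l + μ)⁻¹ • ((l + μ) • x) := by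
        rw [map_smul, key]
      rw [smul_smul, inv_mul_cancel₀ hc, one_smul] at h5
      simpa using h5
    · intro u
      have key : (N (D u, 0)).1 = (l + μ) • u := by
        have hdu : ((D u : H₁), (0 : H₂))
            = (l ^ 2 - μ ^ 2) • ((u : H₁), (0 : H₂)) - ((adjoint A (A u) : H₁), (0 : H₂)) := by
          rw [hD, opD_apply]
          simp [Prod.smul_mk, Prod.mk_sub_mk]
        rw [hdu, map_sub, map_smul]
        have h4 := E4 (A u)
        have h3 : (N (0, A u)).1 = (l - μ) • p u - u := by
          linear_combination (norm := module) -E3 u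
        rw [Prod.fst_sub, Prod.smul_fst, h4, h3]
        have hpu : (N ((u : H₁), (0 : H₂))).1 = p u := rfl
        rw [hpu]
        linear_combination (norm := module) (0 : ℂ) • E3 u
      simp only [ContinuousLinearMap.smul_apply, comp_apply, inl_apply, coe_fst']
      rw [key, smul_smul, inv_mul_cancel₀ hc, one_smul]
  · intro hU
    obtain ⟨K, hK1, hK2⟩ := susy_ptInverse_of_isUnit' hU
    set W : (H₁ × H₂) →L[ℂ] H₁ := (l + μ) • fst ℂ H₁ H₂ + (adjoint A) ∘L snd ℂ H₁ H₂ with hW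
    have hWap : ∀ (x : H₁) (y : H₂), W (x, y) = (l + μ) • x + adjoint A y := by
      intro x y; simp [hW]
    refine susy_isUnit_of_ptInverse'
      (g := (K ∘L W).prod ((l + μ)⁻¹ • (snd ℂ H₁ H₂ + A ∘L (K ∘L W)))) ?_ ?_
    · rintro ⟨x, y⟩
      set u₀ : H₁ := K (W (x, y)) with hu₀
      have hg : ((K ∘L W).prod ((l + μ)⁻¹ • (snd ℂ H₁ H₂ + A ∘L (K ∘L W)))) (x, y)
          = (u₀, (l + μ)⁻¹ • (y + A u₀)) := by
        simp [hu₀]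
      rw [hg, hM, susyM_apply]
      have hAAu : adjoint A (A u₀) = (l ^ 2 - μ ^ 2) • u₀ - ((l + μ) • x + adjoint A y) := by
        have h6 := hK1 (W (x, y))
        rw [hD, opD_apply] at h6
        rw [← hu₀, hWap] at h6
        linear_combination (norm := module) -h6
      refine Prod.ext ?_ ?_
      · show (l - μ) • u₀ - adjoint A ((l + μ)⁻¹ • (y + A u₀)) = x
        rw [map_smul, map_add, hAAu]
        have hZ : adjoint A y + ((l ^ 2 - μ ^ 2) • u₀ - ((l + μ) • x + adjoint A y))
            = (l + μ) • ((l - μ) • u₀ - x) := by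
          module
        rw [hZ, smul_smul, inv_mul_cancel₀ hc, one_smul]
        module
      · show (l + μ) • ((l + μ)⁻¹ • (y + A u₀)) - A u₀ = y
        rw [smul_smul, mul_inv_cancel₀ hc, one_smul]
        module
    · rintro ⟨u, v⟩
      rw [hM, susyM_apply]
      have hWM : W ((l - μ) • u - adjoint A v, (l + μ) • v - A u)
          = (l ^ 2 - μ ^ 2) • u - adjoint A (A u) := by
        rw [hWap, map_sub, map_smul]
        module
      have hKWM : K (W ((l - μ) • u - adjoint A v, (l + μ) • v - A u)) = u := by
        rw [hWM, ← opD_apply A μ l u, ← hD, hK2]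
      refine Prod.ext ?_ ?_
      · simpa using hKWM
      · show (l + μ)⁻¹ • ((((l + μ) • v - A u) : H₂)
            + A (K (W ((l - μ) • u - adjoint A v, (l + μ) • v - A u)))) = v
        rw [hKWM]
        have h7 : (l + μ) • v - A u + A u = (l + μ) • v := by module
        rw [h7, smul_smul, inv_mul_cancel₀ hc, one_smul]

lemma susyOp_apply (A : H₁ →L[ℂ] H₂) (μ : ℂ) (u : H₁) (v : H₂) :
    susyOp A μ (u, v) = (μ • u + adjoint A v, A u - μ • v) := by
  simp [susyOp]

/-- If a block-diagonal operator is invertible, so are the diagonal blocks. -/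
lemma susy_corner {D : H₁ →L[ℂ] H₁} {E : H₂ →L[ℂ] H₂} {M : (H₁ × H₂) →L[ℂ] (H₁ × H₂)}
    (hM : IsUnit M) (h : ∀ u v, M (u, v) = (D u, E v)) : IsUnit D ∧ IsUnit E := by
  obtain ⟨N, hN1, hN2⟩ := susy_ptInverse_of_isUnit' hM
  constructor
  · refine susy_isUnit_of_ptInverse' (g := (fst ℂ H₁ H₂) ∘L N ∘L (inl ℂ H₁ H₂)) ?_ ?_
    · intro x
      have h1 := hN1 (x, 0)
      rw [← Prod.mk.eta (p := N (x, 0)), h] at h1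
      simpa using congrArg Prod.fst h1
    · intro u
      have h2 := hN2 (u, 0)
      rw [h u 0, map_zero] at h2
      simpa using congrArg Prod.fst h2
  · refine susy_isUnit_of_ptInverse' (g := (snd ℂ H₁ H₂) ∘L N ∘L (inr ℂ H₁ H₂)) ?_ ?_
    · intro y
      have h1 := hN1 (0, y)
      rw [← Prod.mk.eta (p := N (0, y)), h] at h1
      simpa using congrArg Prod.snd h1
    · intro v
      have h2 := hN2 (0, v)
      rw [h 0 v, map_zero] at h2
      simpa using congrArg Prod.snd h2

lemma susy_mirror_isUnit (A : H₁ →L[ℂ] H₂) (μ l : ℂ)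
    (h : IsUnit (algebraMap ℂ ((H₁ × H₂) →L[ℂ] (H₁ × H₂)) l - susyOp A μ)) :
    IsUnit (algebraMap ℂ ((H₂ × H₁) →L[ℂ] (H₂ × H₁)) l - susyOp (adjoint A) (-μ)) := by
  obtain ⟨N, hN1, hN2⟩ := susy_ptInverse_of_isUnit' h
  set sw : (H₂ × H₁) →L[ℂ] (H₁ × H₂) := (snd ℂ H₂ H₁).prod (fst ℂ H₂ H₁) with hsw
  set sw' : (H₁ × H₂) →L[ℂ] (H₂ × H₁) := (snd ℂ H₁ H₂).prod (fst ℂ H₁ H₂) with hsw'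
  have hlem1 : ∀ w : H₁ × H₂, sw (sw' w) = w := by rintro ⟨a, b⟩; simp [hsw, hsw']
  have hlem2 : ∀ z : H₂ × H₁, sw' (sw z) = z := by rintro ⟨a, b⟩; simp [hsw, hsw']
  have hkey : ∀ z : H₂ × H₁,
      (algebraMap ℂ ((H₂ × H₁) →L[ℂ] (H₂ × H₁)) l - susyOp (adjoint A) (-μ)) z
        = sw' ((algebraMap ℂ ((H₁ × H₂) →L[ℂ] (H₁ × H₂)) l - susyOp A μ) (sw z)) := by
    rintro ⟨v, u⟩
    rw [susyM_apply]
    have hz : sw (v, u) = (u, v) := by simp [hsw]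
    rw [hz, susyM_apply]
    have hz' : sw' ((l - μ) • u - adjoint A v, (l + μ) • v - A u)
        = ((l + μ) • v - A u, (l - μ) • u - adjoint A v) := by simp [hsw']
    rw [hz', adjoint_adjoint]
    refine Prod.ext ?_ ?_
    · show (l - -μ) • v - A u = (l + μ) • v - A u
      rw [sub_neg_eq_add]
    · show (l + -μ) • u - adjoint A v = (l - μ) • u - adjoint A v
      rw [← sub_eq_add_neg]
  refine susy_isUnit_of_ptInverse' (g := sw' ∘L N ∘L sw) ?_ ?_
  · intro z
    simp only [comp_apply]
    rw [hkey, hlem1, hN1, hlem2]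
  · intro z
    simp only [comp_apply]
    rw [hkey, hlem1, hN2, hlem2]

lemma susy_spec_mirror (A : H₁ →L[ℂ] H₂) (μ : ℂ) :
    spectrum ℂ (susyOp (adjoint A) (-μ)) = spectrum ℂ (susyOp A μ) := by
  ext l
  rw [spectrum.mem_iff, spectrum.mem_iff]
  apply not_congr
  constructor
  · intro h
    have h2 := susy_mirror_isUnit (adjoint A) (-μ) l h
    rwa [adjoint_adjoint, neg_neg] at h2
  · exact susy_mirror_isUnit A μ l

lemma susy_key_spec (A : H₁ →L[ℂ] H₂) (μ l : ℂ) (hc : l + μ ≠ 0) :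
    l ∈ spectrum ℂ (susyOp A μ) ↔ l ^ 2 ∈ spectrum ℂ (opT A μ) := by
  rw [spectrum.mem_iff, spectrum.mem_iff]
  exact not_congr (susy_key_isUnit A μ l hc)

lemma susy_key_spec2 (A : H₁ →L[ℂ] H₂) (μ l : ℂ) (hc : l - μ ≠ 0) :
    l ∈ spectrum ℂ (susyOp A μ) ↔ l ^ 2 ∈ spectrum ℂ (opT (adjoint A) μ) := by
  have h1 : opT (adjoint A) (-μ) = opT (adjoint A) μ := by rw [opT, opT, neg_sq]
  rw [← h1, ← susy_spec_mirror A μ]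
  exact susy_key_spec (adjoint A) (-μ) l (by rwa [← sub_eq_add_neg])

lemma susy_spec_zero (A : H₁ →L[ℂ] H₂) :
    (0 : ℂ) ∈ spectrum ℂ (susyOp A 0)
      ↔ (0 : ℂ) ∈ spectrum ℂ (opT A 0) ∨ (0 : ℂ) ∈ spectrum ℂ (opT (adjoint A) 0) := by
  rw [spectrum.zero_mem_iff, spectrum.zero_mem_iff, spectrum.zero_mem_iff]
  rw [← not_and_or]
  apply not_congr
  have hpt : ∀ (u : H₁) (v : H₂),
      (susyOp A 0 * susyOp A 0) (u, v) = (opT A 0 u, opT (adjoint A) 0 v) := by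
    intro u v
    rw [ContinuousLinearMap.mul_apply, susyOp_apply, susyOp_apply]
    simp [opT, adjoint_adjoint]
  constructor
  · intro h
    exact susy_corner (h.mul h) hpt
  · rintro ⟨h₁, h₂⟩
    obtain ⟨K₁, hK₁a, hK₁b⟩ := susy_ptInverse_of_isUnit' h₁
    obtain ⟨K₂, hK₂a, hK₂b⟩ := susy_ptInverse_of_isUnit' h₂
    have hsq : IsUnit (susyOp A 0 * susyOp A 0) := by
      refine susy_isUnit_of_ptInverse' (g := (K₁ ∘L fst ℂ H₁ H₂).prod (K₂ ∘L snd ℂ H₁ H₂)) ?_ ?_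
      · rintro ⟨x, y⟩
        have hg : ((K₁ ∘L fst ℂ H₁ H₂).prod (K₂ ∘L snd ℂ H₁ H₂)) (x, y) = (K₁ x, K₂ y) := by
          simp
        rw [hg, hpt, hK₁a, hK₂a]
      · rintro ⟨u, v⟩
        rw [hpt]
        have hg : ((K₁ ∘L fst ℂ H₁ H₂).prod (K₂ ∘L snd ℂ H₁ H₂)) (opT A 0 u, opT (adjoint A) 0 v)
            = (K₁ (opT A 0 u), K₂ (opT (adjoint A) 0 v)) := by simp
        rw [hg, hK₁b, hK₂b]
    obtain ⟨S, hS1, hS2⟩ := isUnit_iff_exists.mp hsq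
    have hd : (S * susyOp A 0) * susyOp A 0 = 1 := by rw [mul_assoc]; exact hS2
    have he : susyOp A 0 * (susyOp A 0 * S) = 1 := by rw [← mul_assoc]; exact hS1
    have hde : S * susyOp A 0 = susyOp A 0 * S := by
      calc S * susyOp A 0
          = (S * susyOp A 0) * (susyOp A 0 * (susyOp A 0 * S)) := by rw [he, mul_one]
        _ = ((S * susyOp A 0) * susyOp A 0) * (susyOp A 0 * S) := by rw [← mul_assoc]
        _ = susyOp A 0 * S := by rw [hd, one_mul]
    exact isUnit_iff_exists.mpr ⟨susyOp A 0 * S, he, by rw [← hde, hd]⟩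

lemma susy_specT_bound (A : H₁ →L[ℂ] H₂) (m : ℝ) {s : ℂ}
    (hs : s ∈ spectrum ℂ (opT A (m : ℂ))) : s = (s.re : ℂ) ∧ m ^ 2 ≤ s.re := by
  have hsa : IsSelfAdjoint (opT A (m : ℂ)) := by
    rw [IsSelfAdjoint, opT, star_add, star_smul]
    have h1 : star ((adjoint A).comp A) = (adjoint A).comp A := by
      rw [star_eq_adjoint, adjoint_comp, adjoint_adjoint]
    have h2 : star (ContinuousLinearMap.id ℂ H₁) = ContinuousLinearMap.id ℂ H₁ := star_one _
    rw [h1, h2]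
    have h3 : star (((m : ℝ) : ℂ) ^ 2) = ((m : ℝ) : ℂ) ^ 2 := by
      rw [star_pow, Complex.star_def, Complex.conj_ofReal]
    rw [h3]
  have h1 : s = (s.re : ℂ) := hsa.mem_spectrum_eq_re hs
  refine ⟨h1, ?_⟩
  by_contra hlt
  push_neg at hlt
  set t : ℝ := s.re - m ^ 2 with ht
  have htneg : t < 0 := by simp only [ht]; linarith
  have hpos : ((adjoint A) ∘L A).IsPositive := by
    simpa [ContinuousLinearMap.one_def] using (ContinuousLinearMap.isPositive_one (E := H₂)).adjoint_conj A
  have hnn := SpectrumRestricts.nnreal_iff.mp hpos.spectrumRestricts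
  have hmem : t ∉ spectrum ℝ ((adjoint A) ∘L A) := fun hmem =>
    absurd (hnn t hmem) (not_le.mpr htneg)
  have hmem2 : ((t : ℝ) : ℂ) ∉ spectrum ℂ ((adjoint A) ∘L A) := by
    intro hc
    exact hmem (spectrum.of_algebraMap_mem ℂ hc)
  rw [spectrum.notMem_iff] at hmem2
  apply spectrum.mem_iff.mp hs
  have heq : algebraMap ℂ (H₁ →L[ℂ] H₁) s - opT A (m : ℂ)
      = algebraMap ℂ (H₁ →L[ℂ] H₁) ((t : ℝ) : ℂ) - (adjoint A) ∘L A := by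
    rw [opT, Algebra.algebraMap_eq_smul_one, Algebra.algebraMap_eq_smul_one]
    have hid : ContinuousLinearMap.id ℂ H₁ = (1 : H₁ →L[ℂ] H₁) := rfl
    rw [hid, ht]
    conv_lhs => rw [h1]
    push_cast
    module
  rw [heq]
  exact hmem2

lemma susy_cpow_half {r : ℝ} (hr : 0 ≤ r) :
    ((r : ℂ)) ^ ((1 : ℂ)/2) = ((Real.sqrt r : ℝ) : ℂ) := by
  rw [show ((1:ℂ)/2) = (((1/2 : ℝ) : ℝ) : ℂ) by norm_num]
  rw [← Complex.ofReal_cpow hr, Real.sqrt_eq_rpow]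

end Susy

open ContinuousLinearMap in
/-- The supersymmetric block operator `L = [[m, A*],[A, −m]]` on `H₁ ⊕ H₂` has spectrum
`−√(spec(AA* + m²)) ∪ √(spec(A*A + m²))`. -/
theorem spectrum_susy_block_operator
    {H₁ H₂ : Type*} [NormedAddCommGroup H₁] [InnerProductSpace ℂ H₁] [CompleteSpace H₁]
    [NormedAddCommGroup H₂] [InnerProductSpace ℂ H₂] [CompleteSpace H₂]
    (A : H₁ →L[ℂ] H₂) (m : ℝ) (hm : 0 ≤ m)
    (L : (H₁ × H₂) →L[ℂ] (H₁ × H₂))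
    (hL : L = ((m : ℂ) • fst ℂ H₁ H₂ + (adjoint A).comp (snd ℂ H₁ H₂)).prod
        (A.comp (fst ℂ H₁ H₂) - (m : ℂ) • snd ℂ H₁ H₂)) :
    spectrum ℂ L =
      (fun s : ℂ => -(s ^ ((1 : ℂ) / 2))) ''
          spectrum ℂ (A.comp (adjoint A) + ((m : ℂ) ^ 2) • ContinuousLinearMap.id ℂ H₂) ∪
      (fun s : ℂ => s ^ ((1 : ℂ) / 2)) ''
          spectrum ℂ ((adjoint A).comp A + ((m : ℂ) ^ 2) • ContinuousLinearMap.id ℂ H₁) := by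
  have hL' : L = susyOp A (m : ℂ) := hL
  have hT1 : ((adjoint A).comp A + ((m : ℂ) ^ 2) • ContinuousLinearMap.id ℂ H₁)
      = opT A (m : ℂ) := rfl
  have hT2 : (A.comp (adjoint A) + ((m : ℂ) ^ 2) • ContinuousLinearMap.id ℂ H₂)
      = opT (adjoint A) (m : ℂ) := by rw [opT, adjoint_adjoint]
  rw [hL', hT1, hT2]
  have h00 : ((0 : ℝ) : ℂ) = 0 := by norm_num
  ext l
  simp only [Set.mem_union, Set.mem_image]
  constructor
  · intro hl
    by_cases hc : l + (m : ℂ) = 0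
    · -- l = -m
      have hlm : l = -(m : ℂ) := by linear_combination hc
      by_cases hm0 : m = 0
      · subst hm0
        have hl0 : l = 0 := by rw [hlm]; norm_num
        rw [h00] at hl
        rw [hl0] at hl
        rcases (susy_spec_zero A).mp hl with h | h
        · right
          refine ⟨0, by rw [h00]; exact h, ?_⟩
          rw [hl0, Complex.zero_cpow (by norm_num : ((1 : ℂ)/2) ≠ 0)]
        · left
          refine ⟨0, by rw [h00]; exact h, ?_⟩
          rw [hl0, Complex.zero_cpow (by norm_num : ((1 : ℂ)/2) ≠ 0), neg_zero]
      · -- m ≠ 0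
        have hcm : l - (m : ℂ) ≠ 0 := by
          rw [hlm]
          intro h
          have h3 : ((2 * m : ℝ) : ℂ) = 0 := by push_cast; linear_combination -h
          rw [Complex.ofReal_eq_zero] at h3
          exact hm0 (by linarith)
        have h2' := (susy_key_spec2 A (m : ℂ) l hcm).mp hl
        left
        refine ⟨l ^ 2, h2', ?_⟩
        rw [hlm, show ((-(m : ℂ)) ^ 2) = (((m ^ 2 : ℝ)) : ℂ) by push_cast; ring]
        rw [susy_cpow_half (sq_nonneg m), Real.sqrt_sq hm]
    · -- l + m ≠ 0
      have h2 := (susy_key_spec A (m : ℂ) l hc).mp hl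
      obtain ⟨hre, hge⟩ := susy_specT_bound A m h2
      have hσ0 : (0 : ℝ) ≤ (l ^ 2).re := le_trans (sq_nonneg m) hge
      have hsq : (((Real.sqrt ((l ^ 2).re) : ℝ)) : ℂ) ^ 2 = l ^ 2 := by
        rw [← Complex.ofReal_pow, Real.sq_sqrt hσ0]
        exact hre.symm
      have hfac : (l - ((Real.sqrt ((l ^ 2).re) : ℝ) : ℂ))
          * (l + ((Real.sqrt ((l ^ 2).re) : ℝ) : ℂ)) = 0 := by
        linear_combination -hsq
      have hhalf : (l ^ 2) ^ ((1 : ℂ)/2) = ((Real.sqrt ((l ^ 2).re) : ℝ) : ℂ) := by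
        conv_lhs => rw [hre]
        exact susy_cpow_half hσ0
      rcases mul_eq_zero.mp hfac with h0 | h0
      · have hl' : l = ((Real.sqrt ((l ^ 2).re) : ℝ) : ℂ) := by linear_combination h0
        right
        exact ⟨l ^ 2, h2, by rw [hhalf]; exact hl'.symm⟩
      · have hl' : l = -((Real.sqrt ((l ^ 2).re) : ℝ) : ℂ) := by linear_combination h0
        by_cases hs0 : Real.sqrt ((l ^ 2).re) = 0
        · right
          refine ⟨l ^ 2, h2, ?_⟩
          rw [hhalf, hs0]
          rw [hs0] at hl'
          rw [hl']
          norm_num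
        · have hcm : l - (m : ℂ) ≠ 0 := by
            rw [hl']
            intro h
            have h3 : ((Real.sqrt ((l ^ 2).re) + m : ℝ) : ℂ) = 0 := by
              push_cast; linear_combination -h
            rw [Complex.ofReal_eq_zero] at h3
            have h4 := Real.sqrt_nonneg ((l ^ 2).re)
            exact hs0 (by linarith)
          have h2' := (susy_key_spec2 A (m : ℂ) l hcm).mp hl
          left
          exact ⟨l ^ 2, h2', by rw [hhalf]; exact hl'.symm⟩
  · rintro (⟨s, hs, hval⟩ | ⟨s, hs, hval⟩)
    · -- minus branch
      obtain ⟨hre, hge⟩ := susy_specT_bound (adjoint A) m hs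
      have hσ0 : (0 : ℝ) ≤ s.re := le_trans (sq_nonneg m) hge
      have hhalf : s ^ ((1 : ℂ)/2) = ((Real.sqrt s.re : ℝ) : ℂ) := by
        conv_lhs => rw [hre]
        exact susy_cpow_half hσ0
      rw [← hval, hhalf]
      by_cases h0 : Real.sqrt s.re = 0 ∧ m = 0
      · obtain ⟨ha, hb⟩ := h0
        have hσ : s.re = 0 := by
          have h5 := Real.sq_sqrt hσ0
          rw [ha] at h5
          simpa using h5.symm
        have hs0 : s = 0 := by rw [hre, hσ]; norm_num
        subst hb
        rw [ha, h00, neg_zero]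
        apply (susy_spec_zero A).mpr
        right
        rw [hs0, h00] at hs
        exact hs
      · have hcm : -((Real.sqrt s.re : ℝ) : ℂ) - (m : ℂ) ≠ 0 := by
          intro h
          have h3 : ((Real.sqrt s.re + m : ℝ) : ℂ) = 0 := by
            push_cast; linear_combination -h
          rw [Complex.ofReal_eq_zero] at h3
          have h4 := Real.sqrt_nonneg s.re
          exact h0 ⟨by linarith, by linarith⟩
        apply (susy_key_spec2 A (m : ℂ) _ hcm).mpr
        have hl2 : (-((Real.sqrt s.re : ℝ) : ℂ)) ^ 2 = s := by
          rw [neg_sq, ← Complex.ofReal_pow, Real.sq_sqrt hσ0]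
          exact hre.symm
        rw [hl2]
        exact hs
    · -- plus branch
      obtain ⟨hre, hge⟩ := susy_specT_bound A m hs
      have hσ0 : (0 : ℝ) ≤ s.re := le_trans (sq_nonneg m) hge
      have hhalf : s ^ ((1 : ℂ)/2) = ((Real.sqrt s.re : ℝ) : ℂ) := by
        conv_lhs => rw [hre]
        exact susy_cpow_half hσ0
      rw [← hval, hhalf]
      by_cases h0 : Real.sqrt s.re = 0 ∧ m = 0
      · obtain ⟨ha, hb⟩ := h0
        have hσ : s.re = 0 := by
          have h5 := Real.sq_sqrt hσ0
          rw [ha] at h5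
          simpa using h5.symm
        have hs0 : s = 0 := by rw [hre, hσ]; norm_num
        subst hb
        rw [ha, h00]
        apply (susy_spec_zero A).mpr
        left
        rw [hs0, h00] at hs
        exact hs
      · have hcm : ((Real.sqrt s.re : ℝ) : ℂ) + (m : ℂ) ≠ 0 := by
          intro h
          have h3 : ((Real.sqrt s.re + m : ℝ) : ℂ) = 0 := by
            push_cast; linear_combination h
          rw [Complex.ofReal_eq_zero] at h3
          have h4 := Real.sqrt_nonneg s.re
          exact h0 ⟨by linarith, by linarith⟩
        apply (susy_key_spec A (m : ℂ) _ hcm).mpr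
        have hl2 : (((Real.sqrt s.re : ℝ)) : ℂ) ^ 2 = s := by
          rw [← Complex.ofReal_pow, Real.sq_sqrt hσ0]
          exact hre.symm
        rw [hl2]
        exact hs
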